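/- arXiv:2602.02560 — 2 statements merged into one kernel-verified Lean document; each statement's English description precedes it below -/
import Mathlib

section
/- For probability measures μ and ν on ℝ and real numbers 0 < s ≤ t, one has kl(μ ∗ gaussianReal 0 t ‖ ν ∗ gaussianReal 0 t) ≤ kl(μ ∗ gaussianReal 0 s ‖ ν ∗ gaussianReal 0 s) ≤ kl(μ ‖ ν). In particular, the map sending the diffusion time t to the KL divergence between the time-t marginals of the Gaussian forward process started at μ and at ν is antitone, so the two evolving distributions become increasingly indistinguishable over time. -/
open MeasureTheory ProbabilityTheory Classical

/-- The Kullback–Leibler divergence between two measures, following Mathlib's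
`ProbabilityTheory.kl`: the integral of the log-likelihood ratio `log (dμ/dν)` with respect
to `μ` if `μ ≪ ν` and the log-likelihood ratio is `μ`-integrable, and `+∞` otherwise. -/
noncomputable def kl {α : Type*} [MeasurableSpace α] (μ ν : Measure α) : EReal :=
  if μ ≪ ν ∧ Integrable (llr μ ν) μ then ((∫ x, llr μ ν x ∂μ : ℝ) : EReal) else ⊤

open scoped NNReal

/-!
The KL divergence agrees with Mathlib's `klDiv` on probability measures. Convolving with a
probability measure `γ` is tensoring with `γ`, which leaves the divergence unchanged, followed by
the pushforward along addition, which cannot increase it (data processing). Since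
`gaussianReal 0 t = gaussianReal 0 s ∗ gaussianReal 0 (t - s)`, convolution being associative,
the time-`t` marginals arise from the time-`s` ones by one more such convolution.
-/

open InformationTheory

section KL

variable {α β : Type*} [MeasurableSpace α] [MeasurableSpace β]

lemma kl_eq_klDiv (μ ν : Measure α) [IsProbabilityMeasure μ] [IsProbabilityMeasure ν] :
    kl μ ν = klDiv μ ν := by
  by_cases h : μ ≪ ν ∧ Integrable (llr μ ν) μ
  · have hnonneg := integral_llr_add_sub_measure_univ_nonneg h.1 h.2
    simp only [probReal_univ, add_sub_cancel_right] at hnonneg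
    rw [kl, if_pos h, klDiv_of_ac_of_integrable h.1 h.2, EReal.coe_ennreal_ofReal]
    simp [hnonneg]
  · rw [kl, if_neg h, klDiv_eq_top_iff.mpr (not_and.mp h)]
    rfl

lemma klDiv_prod_right (μ ν : Measure α) [IsFiniteMeasure μ] [IsFiniteMeasure ν]
    (γ : Measure β) [IsProbabilityMeasure γ] :
    klDiv (μ.prod γ) (ν.prod γ) = klDiv μ ν := by
  simpa using klDiv_compProd_left μ ν (Kernel.const α γ)

end KL

section Conv

variable {M : Type*} [AddMonoid M] [MeasurableSpace M] [MeasurableAdd₂ M]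

lemma klDiv_conv_le (μ ν : Measure M) [IsFiniteMeasure μ] [IsFiniteMeasure ν]
    (γ : Measure M) [IsProbabilityMeasure γ] :
    klDiv (μ ∗ γ) (ν ∗ γ) ≤ klDiv μ ν :=
  (klDiv_map_le _ _ measurable_add).trans_eq (klDiv_prod_right μ ν γ)

lemma kl_conv_le (μ ν γ : Measure M) [IsProbabilityMeasure μ] [IsProbabilityMeasure ν]
    [IsProbabilityMeasure γ] :
    kl (μ ∗ γ) (ν ∗ γ) ≤ kl μ ν := by
  simpa only [kl_eq_klDiv, EReal.coe_ennreal_le_coe_ennreal_iff] using klDiv_conv_le μ ν γ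

end Conv

theorem kl_conv_gaussian_antitone_general (μ ν : Measure ℝ)
    [IsProbabilityMeasure μ] [IsProbabilityMeasure ν]
    (s t : ℝ≥0) (hst : s ≤ t) :
    kl (μ.conv (gaussianReal 0 t)) (ν.conv (gaussianReal 0 t)) ≤
        kl (μ.conv (gaussianReal 0 s)) (ν.conv (gaussianReal 0 s)) ∧
    kl (μ.conv (gaussianReal 0 s)) (ν.conv (gaussianReal 0 s)) ≤ kl μ ν := by
  have hgauss : gaussianReal 0 t = gaussianReal 0 s ∗ gaussianReal 0 (t - s) := by
    rw [gaussianReal_conv_gaussianReal, add_zero, add_tsub_cancel_of_le hst]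
  refine ⟨?_, kl_conv_le _ _ _⟩
  rw [hgauss, ← Measure.conv_assoc, ← Measure.conv_assoc]
  exact kl_conv_le _ _ _

/-- Monotone data-processing for the Gaussian (variance-exploding) forward diffusion:
for `0 < s ≤ t`, convolving with a centered Gaussian of variance `t` gives a KL divergence
no larger than convolving with variance `s`, which in turn is no larger than the original
KL divergence. Hence the KL divergence between the evolving laws is antitone in time. -/
theorem kl_conv_gaussian_antitone (μ ν : Measure ℝ)
    [IsProbabilityMeasure μ] [IsProbabilityMeasure ν]
    (s t : ℝ≥0) (hs : 0 < s) (hst : s ≤ t) :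
    kl (μ.conv (gaussianReal 0 t)) (ν.conv (gaussianReal 0 t)) ≤
        kl (μ.conv (gaussianReal 0 s)) (ν.conv (gaussianReal 0 s)) ∧
    kl (μ.conv (gaussianReal 0 s)) (ν.conv (gaussianReal 0 s)) ≤ kl μ ν :=
  kl_conv_gaussian_antitone_general μ ν s t hst
end

section
/- (Symmetry of Shapley values.) Let v be a value function on subsets of [d] and let i, j ∈ [d] be distinct players such that v(T ∪ {i}) = v(T ∪ {j}) for every T ⊆ [d] ∖ {i, j}. Then their Shapley values coincide: φ_i = φ_j. -/
open Finset

/-- The Shapley value of player `i` with respect to a value function `v`: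
`φ_i = Σ_{T ⊆ [d]∖{i}} (|T|! · (d − |T| − 1)!)/d! · (v(T ∪ {i}) − v(T))`. -/
noncomputable def shapleyValue {d : ℕ} (v : Finset (Fin d) → ℝ) (i : Fin d) : ℝ :=
  ∑ T ∈ ({i}ᶜ : Finset (Fin d)).powerset,
    ((T.card.factorial * (d - T.card - 1).factorial : ℕ) : ℝ) / (d.factorial : ℝ) *
      (v (insert i T) - v T)

/-!
Symmetry reduces to anonymity: relabelling the players by the transposition `σ = (i j)` gives
`φ_j(v) = φ_i(v ∘ σ)`, and the symmetry of `i` and `j` in `v` makes the marginal contribution of `i`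
to every coalition `T ∌ i` the same for `v ∘ σ` as for `v`.
-/

theorem Finset.map_swap_eq_self {α : Type*} [DecidableEq α] {i j : α} {T : Finset α}
    (hi : i ∉ T) (hj : j ∉ T) : T.map (Equiv.swap i j).toEmbedding = T := by
  ext x
  rw [mem_map_equiv, Equiv.symm_swap, Equiv.swap_apply_def]
  split_ifs <;> simp_all

theorem shapleyValue_perm {d : ℕ} (v : Finset (Fin d) → ℝ) (σ : Equiv.Perm (Fin d)) (i : Fin d) :
    shapleyValue v (σ i) = shapleyValue (fun T => v (T.map σ.toEmbedding)) i := by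
  refine (sum_equiv σ.finsetCongr (fun T => ?_) fun T _ => ?_).symm
  · simp
  · simp [map_insert]

theorem marginal_map_swap {α β : Type*} [DecidableEq α] [AddGroup β] (v : Finset α → β)
    {i j : α} (h : ∀ T : Finset α, i ∉ T → j ∉ T → v (insert i T) = v (insert j T))
    {T : Finset α} (hiT : i ∉ T) :
    v ((insert i T).map (Equiv.swap i j).toEmbedding) - v (T.map (Equiv.swap i j).toEmbedding) =
      v (insert i T) - v T := by
  rw [map_insert, Equiv.toEmbedding_apply, Equiv.swap_apply_left]
  by_cases hjT : j ∈ T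
  · obtain ⟨S, hjS, rfl⟩ : ∃ S, j ∉ S ∧ insert j S = T :=
      ⟨T.erase j, notMem_erase j T, insert_erase hjT⟩
    have hiS : i ∉ S := fun hi => hiT (mem_insert_of_mem hi)
    rw [map_insert, Equiv.toEmbedding_apply, Equiv.swap_apply_right, map_swap_eq_self hiS hjS,
      insert_comm, h S hiS hjS]
  · rw [map_swap_eq_self hiT hjT, h T hiT hjT]

theorem shapleyValue_symmetry_general {d : ℕ} (v : Finset (Fin d) → ℝ) (i j : Fin d)
    (h : ∀ T : Finset (Fin d), T ⊆ ({i, j} : Finset (Fin d))ᶜ →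
      v (insert i T) = v (insert j T)) :
    shapleyValue v i = shapleyValue v j := by
  have h' : ∀ T : Finset (Fin d), i ∉ T → j ∉ T → v (insert i T) = v (insert j T) :=
    fun T hi hj => h T <| by
      rw [subset_compl_comm, insert_subset_iff, singleton_subset_iff]
      simp [hi, hj]
  rw [← Equiv.swap_apply_left i j, shapleyValue_perm]
  refine sum_congr rfl fun T hT => ?_
  rw [marginal_map_swap v h' (subset_compl_singleton.mp (mem_powerset.mp hT))]

/-- Symmetry of Shapley values: two players that contribute identically to every coalition
not containing either of them receive equal Shapley values. -/
theorem shapleyValue_symmetry {d : ℕ} (v : Finset (Fin d) → ℝ) (i j : Fin d) (hij : i ≠ j)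
    (h : ∀ T : Finset (Fin d), T ⊆ ({i, j} : Finset (Fin d))ᶜ →
      v (insert i T) = v (insert j T)) :
    shapleyValue v i = shapleyValue v j :=
  shapleyValue_symmetry_general v i j h
end
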